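/- arXiv:1108.0095 — 2 statements merged into one kernel-verified Lean document; each statement's English description precedes it below -/
import Mathlib

section
/- Let $a > 1$ be an integer. Then $\int_1^{\infty} \left(a\left\{\frac{t+1}{a}\right\} - \{t\} - 1\right) \frac{dt}{t^2} = \frac{\Gamma'((a-1)/a)}{\Gamma((a-1)/a)} + \log a + \gamma$, where $\{x\}$ denotes the fractional part of $x$. -/
/-!
On `[n, n + 1)` the numerator equals `n - a ⌊(n + 1) / a⌋`, so the integral over `[1, X]` is a
finite sum, which by induction on `X` equals
`H_X - 1 + a ⌊X / a⌋ / X - ∑_{k < ⌊X / a⌋} 1 / ((a - 1) / a + k)`.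
At `X = a M` the last sum is `ψ((a - 1) / a + M) - ψ((a - 1) / a)` by the recurrence
`ψ(x + 1) = ψ(x) + 1 / x`. Let `M → ∞`: `H_{aM} - log (a M) → γ`, and `ψ(x + M) - log M → 0`
because `ψ` is monotone (`log Γ` is convex) and `ψ(M + 1) = H_M - γ`.
-/

open MeasureTheory Real Set Filter Topology

lemma integral_div_sq {x y : ℝ} (c : ℝ) (hx : 0 < x) (hxy : x ≤ y) :
    ∫ t in x..y, c / t ^ 2 = c * (x⁻¹ - y⁻¹) := by
  have h0 : (0 : ℝ) ∉ uIcc x y := by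
    rw [uIcc_of_le hxy]; exact fun h ↦ hx.not_ge h.1
  simp_rw [div_eq_mul_inv, ← zpow_natCast, ← zpow_neg]
  rw [intervalIntegral.integral_const_mul, integral_zpow (Or.inr ⟨by norm_num, h0⟩)]
  congr 1
  norm_num
  ring

section StepFunction

variable (h : ℕ → ℝ)

lemma eqOn_natFloor_div_sq (n : ℕ) :
    EqOn (fun t : ℝ ↦ h ⌊t⌋₊ / t ^ 2) (fun t ↦ h n / t ^ 2) (Ico n (n + 1)) :=
  fun t ht ↦ by simp only [Nat.floor_eq_on_Ico n t ht]

lemma intervalIntegrable_natFloor_div_sq {n : ℕ} (hn : 0 < n) :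
    IntervalIntegrable (fun t : ℝ ↦ h ⌊t⌋₊ / t ^ 2) volume n (n + 1) := by
  have hcont : ContinuousOn (fun t : ℝ ↦ h n / t ^ 2) (Icc n (n + 1)) :=
    continuousOn_const.div (continuousOn_pow 2) fun t ht ↦ by
      have : (0 : ℝ) < t := lt_of_lt_of_le (by exact_mod_cast hn) ht.1
      positivity
  rw [intervalIntegrable_iff_integrableOn_Ico_of_le (by linarith)]
  exact ((hcont.integrableOn_Icc).mono_set Ico_subset_Icc_self).congr_fun
    (eqOn_natFloor_div_sq h n).symm measurableSet_Ico

lemma integral_natFloor_div_sq {n : ℕ} (hn : 0 < n) :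
    ∫ t in (n : ℝ)..(n + 1), h ⌊t⌋₊ / t ^ 2 = h n * ((n : ℝ)⁻¹ - ((n : ℝ) + 1)⁻¹) := by
  have hle : (n : ℝ) ≤ n + 1 := by linarith
  rw [← integral_div_sq (h n) (by exact_mod_cast hn) hle, intervalIntegral.integral_of_le hle,
    intervalIntegral.integral_of_le hle, ← integral_Ico_eq_integral_Ioc,
    ← integral_Ico_eq_integral_Ioc,
    setIntegral_congr_fun measurableSet_Ico (eqOn_natFloor_div_sq h n)]

lemma integral_natFloor_div_sq_eq_sum {m X : ℕ} (hm : 0 < m) (hmX : m ≤ X) :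
    ∫ t in (m : ℝ)..X, h ⌊t⌋₊ / t ^ 2
      = ∑ n ∈ Finset.Ico m X, h n * ((n : ℝ)⁻¹ - ((n : ℝ) + 1)⁻¹) := by
  rw [← intervalIntegral.sum_integral_adjacent_intervals_Ico (a := ((↑) : ℕ → ℝ)) hmX]
  · refine Finset.sum_congr rfl fun n hn ↦ ?_
    rw [Nat.cast_succ, integral_natFloor_div_sq h (by grind)]
  · intro n hn
    rw [Nat.cast_succ]
    exact intervalIntegrable_natFloor_div_sq h (by grind)

lemma integrableOn_Ioi_natFloor_div_sq {C c : ℝ} (hc : 0 < c) (hC : ∀ n, |h n| ≤ C) :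
    IntegrableOn (fun t : ℝ ↦ h ⌊t⌋₊ / t ^ 2) (Ioi c) := by
  have hmeas : Measurable fun t : ℝ ↦ h ⌊t⌋₊ / t ^ 2 :=
    (measurable_from_nat.comp Nat.measurable_floor).div (measurable_id.pow_const 2)
  refine ((integrableOn_Ioi_rpow_of_lt (by norm_num : (-2 : ℝ) < -1) hc).const_mul C).mono'
    hmeas.aestronglyMeasurable.restrict ?_
  rw [ae_restrict_iff' measurableSet_Ioi]
  refine Eventually.of_forall fun t (ht : c < t) ↦ ?_
  have ht0 : 0 < t := hc.trans ht
  rw [rpow_neg ht0.le, norm_div, norm_pow, Real.norm_eq_abs, Real.norm_of_nonneg ht0.le,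
    div_eq_mul_inv]
  norm_cast
  exact mul_le_mul_of_nonneg_right (hC _) (by positivity)

end StepFunction

lemma fract_eq_sub_natFloor {x : ℝ} (hx : 0 ≤ x) : Int.fract x = x - ⌊x⌋₊ := by
  rw [Int.fract, natCast_floor_eq_intCast_floor hx]

lemma mul_fract_add_one_div_sub_fract_sub_one {a : ℕ} (ha : a ≠ 0) {t : ℝ} (ht : 0 ≤ t) :
    a * Int.fract ((t + 1) / a) - Int.fract t - 1 = ⌊t⌋₊ - a * ((⌊t⌋₊ + 1) / a : ℕ) := by
  have ha' : (a : ℝ) ≠ 0 := by exact_mod_cast ha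
  rw [fract_eq_sub_natFloor ht, fract_eq_sub_natFloor (by positivity), Nat.floor_div_natCast,
    Nat.floor_add_one ht]
  field_simp
  ring

lemma abs_sub_mul_add_one_div_le {a : ℕ} (ha : 0 < a) (n : ℕ) :
    |(n : ℝ) - a * ((n + 1) / a : ℕ)| ≤ a := by
  have hdiv : (a : ℝ) * ((n + 1) / a : ℕ) + ((n + 1) % a : ℕ) = n + 1 := by
    exact_mod_cast Nat.div_add_mod (n + 1) a
  have hmod : (((n + 1) % a : ℕ) : ℝ) < a := by exact_mod_cast Nat.mod_lt (n + 1) ha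
  have ha1 : (1 : ℝ) ≤ a := by exact_mod_cast ha
  rw [abs_le]
  constructor <;> linarith [Nat.cast_nonneg (α := ℝ) ((n + 1) % a)]

lemma sum_Ico_sub_mul_succ_div_mul_inv_sub_inv (a X : ℕ) (ha : 1 < a) (hX : 1 ≤ X) :
    ∑ n ∈ Finset.Ico 1 X, ((n : ℝ) - a * ((n + 1) / a : ℕ)) * ((n : ℝ)⁻¹ - ((n : ℝ) + 1)⁻¹)
      = harmonic X - 1 + a * (X / a : ℕ) / X
        - ∑ k ∈ Finset.range (X / a), (((a : ℝ) - 1) / a + k)⁻¹ := by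
  induction X, hX using Nat.le_induction with
  | base => simp [Nat.div_eq_of_lt ha]
  | succ X hX ih =>
    have hX0 : (X : ℝ) ≠ 0 := by positivity
    have ha0 : (a : ℝ) ≠ 0 := by positivity
    rw [Finset.sum_Ico_succ_top hX, ih, harmonic_succ, Nat.succ_div]
    by_cases hdvd : a ∣ X + 1
    · have hq : (a : ℝ) * (X / a + 1 : ℕ) = X + 1 := by
        rw [← Nat.succ_div_of_dvd hdvd]; exact_mod_cast Nat.mul_div_cancel' hdvd
      rw [if_pos hdvd, Finset.sum_range_succ]
      push_cast at hq ⊢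
      have hterm : (((a : ℝ) - 1) / a + (X / a : ℕ))⁻¹ = a / X := by
        rw [inv_eq_iff_eq_inv, inv_div]
        field_simp
        linear_combination hq
      rw [hterm, hq]
      generalize ∑ k ∈ Finset.range (X / a), (((a : ℝ) - 1) / a + k)⁻¹ = S
      generalize ((X / a : ℕ) : ℝ) = q at hq ⊢
      field_simp
      linear_combination ((X : ℝ) + 1) * hq
    · rw [if_neg hdvd, add_zero]
      generalize ∑ k ∈ Finset.range (X / a), (((a : ℝ) - 1) / a + k)⁻¹ = S
      push_cast
      field_simp
      ring

namespace Real

lemma differentiableAt_Gamma_of_pos {x : ℝ} (hx : 0 < x) : DifferentiableAt ℝ Gamma x :=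
  differentiableOn_Gamma_Ioi.differentiableAt (Ioi_mem_nhds hx)

lemma logDeriv_Gamma_add_one {x : ℝ} (hx : 0 < x) :
    logDeriv Gamma (x + 1) = logDeriv Gamma x + x⁻¹ := by
  have hshift : logDeriv Gamma (x + 1) = logDeriv (fun y ↦ Gamma (y + 1)) x := by
    simpa [Function.comp_def] using (logDeriv_comp (g := fun y : ℝ ↦ y + 1)
      (differentiableAt_Gamma_of_pos (by linarith)) (differentiableAt_id.add_const 1)).symm
  have hrec : (fun y ↦ Gamma (y + 1)) =ᶠ[𝓝 x] fun y ↦ y * Gamma y := by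
    filter_upwards [Ioi_mem_nhds hx] with y hy using Gamma_add_one (ne_of_gt hy)
  rw [hshift, (logDeriv_congr_nhds hrec).eq_of_nhds, logDeriv_mul (f := fun y ↦ y) x hx.ne'
    (Gamma_pos_of_pos hx).ne' differentiableAt_id (differentiableAt_Gamma_of_pos hx),
    logDeriv_id', one_div, add_comm]

lemma logDeriv_Gamma_add_nat {x : ℝ} (hx : 0 < x) (n : ℕ) :
    logDeriv Gamma (x + n) = logDeriv Gamma x + ∑ k ∈ Finset.range n, (x + k)⁻¹ := by
  induction n with
  | zero => simp
  | succ n ih =>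
    rw [Finset.sum_range_succ, ← add_assoc, ← ih, Nat.cast_succ, ← add_assoc,
      logDeriv_Gamma_add_one (by positivity)]

lemma logDeriv_Gamma_nat_add_one (n : ℕ) :
    logDeriv Gamma (n + 1) = -eulerMascheroniConstant + harmonic n := by
  rw [logDeriv_apply, deriv_Gamma_nat, Gamma_nat_eq_factorial]
  field_simp

lemma monotoneOn_logDeriv_Gamma : MonotoneOn (logDeriv Gamma) (Ioi 0) := by
  refine (convexOn_log_Gamma.monotoneOn_deriv fun x hx ↦
    (differentiableAt_Gamma_of_pos hx).log (Gamma_pos_of_pos hx).ne').congr fun x hx ↦ ?_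
  exact deriv_log_comp_eq_logDeriv (differentiableAt_Gamma_of_pos hx) (Gamma_pos_of_pos hx).ne'

lemma tendsto_logDeriv_Gamma_add_nat_sub_log {x : ℝ} (hx₀ : 0 ≤ x) (hx₁ : x ≤ 1) :
    Tendsto (fun n : ℕ ↦ logDeriv Gamma (x + n) - log n) atTop (𝓝 0) := by
  have hH : Tendsto (fun n : ℕ ↦ (harmonic n : ℝ) - log n - eulerMascheroniConstant)
      atTop (𝓝 0) := by
    simpa using tendsto_harmonic_sub_log.sub_const eulerMascheroniConstant
  refine tendsto_of_tendsto_of_tendsto_of_le_of_le'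
    (by simpa using hH.sub tendsto_inv_atTop_nhds_zero_nat) hH ?_ ?_
  all_goals filter_upwards [eventually_gt_atTop 0] with n hn
  all_goals have hn' : (0 : ℝ) < n := by exact_mod_cast hn
  · have hmono := monotoneOn_logDeriv_Gamma (show (n : ℝ) ∈ Ioi 0 from hn')
      (show x + n ∈ Ioi 0 by simp only [mem_Ioi]; positivity) (by linarith)
    have hrec := logDeriv_Gamma_add_one hn'
    rw [logDeriv_Gamma_nat_add_one] at hrec
    linarith
  · have hmono := monotoneOn_logDeriv_Gamma
      (show x + n ∈ Ioi 0 by simp only [mem_Ioi]; positivity)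
      (show (n : ℝ) + 1 ∈ Ioi 0 by simp only [mem_Ioi]; positivity) (by linarith)
    rw [logDeriv_Gamma_nat_add_one] at hmono
    linarith

end Real

lemma integral_one_mul_eq_harmonic_sub_logDeriv_Gamma {a M : ℕ} (ha : 1 < a) (hM : 0 < M) :
    ∫ t in (1 : ℝ)..(a * M : ℕ), ((⌊t⌋₊ : ℝ) - a * ((⌊t⌋₊ + 1) / a : ℕ)) / t ^ 2
      = harmonic (a * M) - (logDeriv Gamma (((a : ℝ) - 1) / a + M)
        - logDeriv Gamma (((a : ℝ) - 1) / a)) := by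
  have ha₀ : 0 < a := by omega
  have haM : 0 < a * M := Nat.mul_pos ha₀ hM
  have hx₀ : 0 < ((a : ℝ) - 1) / a := div_pos (by norm_num; exact_mod_cast ha) (by positivity)
  have hsum :=
    integral_natFloor_div_sq_eq_sum (fun n ↦ (n : ℝ) - a * ((n + 1) / a : ℕ)) one_pos haM
  rw [Nat.cast_one] at hsum
  rw [hsum, sum_Ico_sub_mul_succ_div_mul_inv_sub_inv a (a * M) ha haM,
    Nat.mul_div_cancel_left M ha₀, logDeriv_Gamma_add_nat hx₀ M, Nat.cast_mul,
    div_self (by positivity)]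
  ring

theorem integral_fract_eq_digamma_add (a : ℕ) (ha : 1 < a) :
    ∫ t in Set.Ioi (1 : ℝ),
        ((a : ℝ) * Int.fract ((t + 1) / a) - Int.fract t - 1) / t ^ 2
      = deriv Real.Gamma (((a : ℝ) - 1) / a) / Real.Gamma (((a : ℝ) - 1) / a)
        + Real.log a + Real.eulerMascheroniConstant := by
  have ha₀ : 0 < a := by omega
  set x₀ : ℝ := ((a : ℝ) - 1) / a
  have hx₀ : 0 ≤ x₀ := div_nonneg (by norm_num; exact_mod_cast ha.le) (by positivity)
  have hx₁ : x₀ ≤ 1 := div_le_one_of_le₀ (by linarith) (by positivity)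
  rw [setIntegral_congr_fun measurableSet_Ioi fun t (ht : 1 < t) ↦ by
    rw [mul_fract_add_one_div_sub_fract_sub_one ha₀.ne' (zero_le_one.trans ht.le)]]
  have hmul : Tendsto (fun M : ℕ ↦ a * M) atTop atTop := tendsto_id.const_mul_atTop' ha₀
  refine tendsto_nhds_unique (intervalIntegral_tendsto_integral_Ioi 1
    (integrableOn_Ioi_natFloor_div_sq _ one_pos (abs_sub_mul_add_one_div_le ha₀))
    (tendsto_natCast_atTop_atTop.comp hmul)) ?_
  have hlim := ((tendsto_harmonic_sub_log.comp hmul).sub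
    (tendsto_logDeriv_Gamma_add_nat_sub_log hx₀ hx₁)).const_add (logDeriv Gamma x₀ + log a)
  rw [sub_zero] at hlim
  rw [← logDeriv_apply]
  refine hlim.congr' ?_
  filter_upwards [eventually_gt_atTop 0] with M hM
  simp only [Function.comp_apply]
  rw [integral_one_mul_eq_harmonic_sub_logDeriv_Gamma ha hM, Nat.cast_mul,
    log_mul (by positivity) (by positivity)]
  ring
end

section
/- Let $a > 1$ and $N \ge 0$ be integers, and for each nonnegative integer $n$ let $R_a(n)$ denote the number of ordered pairs $(x,y)$ of positive integers with $axy - x - y = n$. Then $\sum_{0 \le n \le N} R_a(n) = \frac{1}{\phi(a)^2} \sum_{\chi_1 \ (\mathrm{mod}\ a)} \sum_{\chi_2 \ (\mathrm{mod}\ a)} \overline{\chi_1}(-1)\, \overline{\chi_2}(-1) \sum_{m = 1}^{aN+1} \sum_{uv = m} \chi_1(u) \chi_2(v)$, where the two outer sums run over all Dirichlet characters modulo $a$ and the innermost sum runs over ordered pairs of positive integers $(u,v)$ with $uv = m$. -/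
/-!
Substituting `u = a x - 1`, `v = a y - 1` turns `a x y - x - y = n` into `u v = a n + 1` with
`u ≡ v ≡ -1 (mod a)`, so `R_a(n)` counts the factorisations of `a n + 1` into two factors
`≡ -1 (mod a)`. A number with such a factorisation is `≡ 1 (mod a)`, so summing over `n ≤ N`
counts these factorisations of all `m ≤ a N + 1`; orthogonality of Dirichlet characters,
applied to each factor, detects the two congruences.
-/

open Finset

/-- `R a n` is the number of ordered pairs `(x, y)` of positive integers with
`a * x * y - x - y = n` (stated subtraction-free as `a * x * y = x + y + n`). -/
noncomputable def R (a n : ℕ) : ℕ :=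
  Set.ncard {p : ℕ × ℕ | 0 < p.1 ∧ 0 < p.2 ∧ a * p.1 * p.2 = p.1 + p.2 + n}

namespace DirichletCharacter

variable {n : ℕ} [NeZero n]

lemma sum_conj_mul_char_eq {b : ZMod n} (hb : IsUnit b) (x : ZMod n) :
    ∑ χ : DirichletCharacter ℂ n, starRingEnd ℂ (χ b) * χ x =
      if b = x then (n.totient : ℂ) else 0 := by
  rw [← sum_char_inv_mul_char_eq ℂ hb x]
  obtain ⟨u, rfl⟩ := hb
  refine sum_congr rfl fun χ _ => ?_
  rw [starRingEnd_apply, MulChar.star_apply', MulChar.inv_apply, Ring.inverse_unit,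
    ZMod.inv_coe_unit]

lemma sum_sum_conj_mul_conj_mul_sum_eq_card {ι : Type*} (s : Finset ι) (f g : ι → ZMod n)
    {b c : ZMod n} (hb : IsUnit b) (hc : IsUnit c) :
    ∑ χ₁ : DirichletCharacter ℂ n, ∑ χ₂ : DirichletCharacter ℂ n,
      starRingEnd ℂ (χ₁ b) * starRingEnd ℂ (χ₂ c) * ∑ i ∈ s, χ₁ (f i) * χ₂ (g i) =
      n.totient ^ 2 * #{i ∈ s | f i = b ∧ g i = c} := by
  calc _ = ∑ i ∈ s, (∑ χ₁ : DirichletCharacter ℂ n, starRingEnd ℂ (χ₁ b) * χ₁ (f i)) *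
            ∑ χ₂ : DirichletCharacter ℂ n, starRingEnd ℂ (χ₂ c) * χ₂ (g i) := by
        simp_rw [sum_mul_sum, Finset.mul_sum]
        rw [sum_comm (s := s)]
        refine sum_congr rfl fun χ₁ _ => ?_
        rw [sum_comm (s := s)]
        exact sum_congr rfl fun χ₂ _ => sum_congr rfl fun i _ => by ring
    _ = ∑ i ∈ s, if f i = b ∧ g i = c then (n.totient : ℂ) ^ 2 else 0 := by
        simp only [sum_conj_mul_char_eq hb, sum_conj_mul_char_eq hc, eq_comm (a := b),
          eq_comm (a := c), ite_zero_mul_ite_zero, sq]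
    _ = _ := by rw [← sum_filter, sum_const, nsmul_eq_mul, mul_comm]

end DirichletCharacter

lemma Nat.sum_sum_divisors_eq_sum_sigma_divisorsAntidiagonal {M : Type*} [AddCommMonoid M]
    (s : Finset ℕ) (F : ℕ → ℕ → M) :
    ∑ m ∈ s, ∑ u ∈ m.divisors, F u (m / u) =
      ∑ x ∈ s.sigma Nat.divisorsAntidiagonal, F x.2.1 x.2.2 :=
  (sum_congr rfl fun _ _ => (Nat.sum_divisorsAntidiagonal F).symm).trans
    (sum_sigma' _ _ fun _ (p : ℕ × ℕ) => F p.1 p.2)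

lemma ZMod.natCast_eq_neg_one_iff_dvd {a u : ℕ} : (u : ZMod a) = -1 ↔ a ∣ u + 1 := by
  rw [← ZMod.natCast_eq_zero_iff, Nat.cast_add_one, eq_neg_iff_add_eq_zero]

def negOneDivisorPairs (a m : ℕ) : Finset (ℕ × ℕ) :=
  {p ∈ m.divisorsAntidiagonal | (p.1 : ZMod a) = -1 ∧ (p.2 : ZMod a) = -1}

lemma exists_eq_mul_add_one_of_mem_negOneDivisorPairs {a m : ℕ} {p : ℕ × ℕ}
    (hp : p ∈ negOneDivisorPairs a m) : ∃ k, m = a * k + 1 := by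
  obtain ⟨⟨hpm, hm⟩, h₁, h₂⟩ := by simpa [negOneDivisorPairs] using hp
  have hm_cast : ((1 : ℕ) : ZMod a) = m := by
    rw [← hpm]; push_cast; rw [h₁, h₂]; norm_num
  obtain ⟨k, hk⟩ :=
    (Nat.modEq_iff_dvd' (by omega)).mp ((ZMod.natCast_eq_natCast_iff _ _ _).mp hm_cast)
  exact ⟨k, by omega⟩

lemma R_eq_card_negOneDivisorPairs {a : ℕ} (ha : 0 < a) (n : ℕ) :
    R a n = #(negOneDivisorPairs a (a * n + 1)) := by
  rw [R, ← Set.ncard_coe_finset]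
  refine Set.ncard_congr (fun p _ => (a * p.1 - 1, a * p.2 - 1)) ?_ ?_ ?_
  · rintro ⟨x, y⟩ ⟨hx, hy, hxy⟩
    have hax : 1 ≤ a * x := Nat.mul_pos ha hx
    have hay : 1 ≤ a * y := Nat.mul_pos ha hy
    simp only [negOneDivisorPairs, coe_filter, Set.mem_ofPred_eq, Nat.mem_divisorsAntidiagonal,
      ZMod.natCast_eq_neg_one_iff_dvd, Nat.sub_add_cancel hax, Nat.sub_add_cancel hay]
    refine ⟨⟨?_, by omega⟩, dvd_mul_right a x, dvd_mul_right a y⟩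
    zify [hax, hay] at hxy ⊢
    linear_combination (a : ℤ) * hxy
  · rintro ⟨x, y⟩ ⟨x', y'⟩ ⟨hx, hy, -⟩ ⟨hx', hy', -⟩ h
    have hax : 1 ≤ a * x := Nat.mul_pos ha hx
    have hay : 1 ≤ a * y := Nat.mul_pos ha hy
    have hax' : 1 ≤ a * x' := Nat.mul_pos ha hx'
    have hay' : 1 ≤ a * y' := Nat.mul_pos ha hy'
    simp only [Prod.mk.injEq] at h ⊢
    exact ⟨Nat.eq_of_mul_eq_mul_left ha (by omega), Nat.eq_of_mul_eq_mul_left ha (by omega)⟩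
  · rintro ⟨u, v⟩ h
    simp only [negOneDivisorPairs, coe_filter, Set.mem_ofPred_eq, Nat.mem_divisorsAntidiagonal,
      ZMod.natCast_eq_neg_one_iff_dvd] at h
    obtain ⟨⟨huv, -⟩, ⟨x, hx⟩, ⟨y, hy⟩⟩ := h
    refine ⟨(x, y), ⟨Nat.pos_of_ne_zero ?_, Nat.pos_of_ne_zero ?_, ?_⟩, ?_⟩
    · rintro rfl; simp at hx
    · rintro rfl; simp at hy
    · apply Nat.eq_of_mul_eq_mul_left ha
      zify at hx hy huv ⊢
      linear_combination huv - (v : ℤ) * hx + (1 - a * x : ℤ) * hy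
    · simp only [Prod.mk.injEq]; omega

lemma sum_range_R_eq_sum_card_negOneDivisorPairs {a : ℕ} (ha : 0 < a) (N : ℕ) :
    ∑ n ∈ range (N + 1), R a n = ∑ m ∈ Icc 1 (a * N + 1), #(negOneDivisorPairs a m) := by
  simp only [R_eq_card_negOneDivisorPairs ha]
  refine sum_bij_ne_zero (fun n _ _ => a * n + 1) ?_ ?_ ?_ (fun _ _ _ => rfl)
  · intro n hn _
    simp only [mem_range, mem_Icc] at hn ⊢
    have := Nat.mul_le_mul_left a (Nat.lt_succ_iff.mp hn)
    omega
  · intro n₁ _ _ n₂ _ _ h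
    exact Nat.eq_of_mul_eq_mul_left ha (by omega)
  · intro m hm hne
    obtain ⟨p, hp⟩ := card_ne_zero.mp hne
    obtain ⟨k, rfl⟩ := exists_eq_mul_add_one_of_mem_negOneDivisorPairs hp
    simp only [mem_Icc, mem_range] at hm ⊢
    exact ⟨k, Nat.lt_succ_of_le (Nat.le_of_mul_le_mul_left (by omega) ha), hne, rfl⟩

theorem sum_R_eq_character_sum (a : ℕ) (ha : 1 < a) (N : ℕ) :
    (∑ n ∈ Finset.range (N + 1), (R a n : ℂ))
      = (1 / (a.totient : ℂ) ^ 2) *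
          ∑ χ₁ : DirichletCharacter ℂ a, ∑ χ₂ : DirichletCharacter ℂ a,
            (starRingEnd ℂ) (χ₁ (-1)) * (starRingEnd ℂ) (χ₂ (-1)) *
              ∑ m ∈ Finset.Icc 1 (a * N + 1),
                ∑ u ∈ m.divisors, χ₁ (↑u : ZMod a) * χ₂ (↑(m / u) : ZMod a) := by
  have ha₀ : 0 < a := by omega
  have : NeZero a := ⟨ha₀.ne'⟩
  have hφ : (a.totient : ℂ) ≠ 0 := Nat.cast_ne_zero.mpr (Nat.totient_pos.mpr ha₀).ne'
  have hsigma (χ₁ χ₂ : DirichletCharacter ℂ a) :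
      ∑ m ∈ Icc 1 (a * N + 1), ∑ u ∈ m.divisors, χ₁ (u : ZMod a) * χ₂ ((m / u : ℕ) : ZMod a) =
        ∑ x ∈ (Icc 1 (a * N + 1)).sigma Nat.divisorsAntidiagonal,
          χ₁ (x.2.1 : ZMod a) * χ₂ (x.2.2 : ZMod a) :=
    Nat.sum_sum_divisors_eq_sum_sigma_divisorsAntidiagonal _ fun u v => χ₁ u * χ₂ v
  simp_rw [hsigma]
  rw [DirichletCharacter.sum_sum_conj_mul_conj_mul_sum_eq_card _ _ _ isUnit_one.neg
      isUnit_one.neg, filter_sigma, card_sigma, one_div, inv_mul_cancel_left₀ (pow_ne_zero 2 hφ),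
    ← Nat.cast_sum]
  exact congrArg Nat.cast (sum_range_R_eq_sum_card_negOneDivisorPairs ha₀ N)
end
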